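/- A k-algebra A is a *-algebra (every element of M_A is invertible in A) if and only if the canonical localization map A → A_M is an isomorphism. In particular, A_M is a *-algebra for every k-algebra A. -/

import Mathlib

/-!
If every element of `M_A` is a unit, localizing at `M_A` changes nothing; conversely the
elements of `M_A` become units in `A_M`, so bijectivity makes them units in `A`.

For `A_M`, take `D(b) ∈ M_{A_M}` and write `b = a / t` with a common denominator
`t = P(e) ∈ M_A`. The homogenization `H(x, w) = P(w) ^ N * D(x / P(w))`, `N = deg D`, still
has no zero in `k`, so `H(a, e) ∈ M_A`; its image `D(b) * t ^ N` in `A_M` is a unit, hence so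
is `D(b)`.
-/

open MvPolynomial

/-- The set `M_B` of all evaluations in `B` of polynomials over `k` with no rational zero
in `k`. -/
def MAset (k : Type) [Field k] (B : Type) [CommRing B] [Algebra k B] : Set B :=
  {x | ∃ (m : ℕ) (D : MvPolynomial (Fin m) k) (b : Fin m → B),
    (∀ v : Fin m → k, eval v D ≠ 0) ∧ x = aeval b D}

theorem IsLocalization.bijective_iff_le_isUnit {R S : Type*} [CommRing R] [CommRing S]
    [Algebra R S] (M : Submonoid R) [IsLocalization M S] :
    Function.Bijective (algebraMap R S) ↔ M ≤ IsUnit.submonoid R := by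
  refine ⟨fun h m hm => ?_, fun h => (IsLocalization.atUnits R M (S := S) h).bijective⟩
  exact (MulEquiv.isUnit_map (RingEquiv.ofBijective _ h)).mp (map_units S ⟨m, hm⟩)

namespace MvPolynomial

variable {R S σ τ : Type*} [CommSemiring R] [CommSemiring S] [Algebra R S] [Fintype σ]

/-- `P(w) ^ N * D(x / P(w))` with `N = totalDegree D`, written without division. -/
noncomputable def homogenizeWith (D : MvPolynomial σ R) (P : MvPolynomial τ R) :
    MvPolynomial (σ ⊕ τ) R :=
  ∑ α ∈ D.support, C (D.coeff α) * (∏ i, X (Sum.inl i) ^ α i) *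
    rename Sum.inr P ^ (D.totalDegree - ∑ i, α i)

theorem sum_le_totalDegree {D : MvPolynomial σ R} {α : σ →₀ ℕ} (h : α ∈ D.support) :
    ∑ i, α i ≤ D.totalDegree := by
  simpa [Finsupp.sum_fintype] using le_totalDegree h

theorem aeval_homogenizeWith (D : MvPolynomial σ R) (P : MvPolynomial τ R) (x : σ → S)
    (w : τ → S) :
    aeval (Sum.elim (fun i => x i * aeval w P) w) (homogenizeWith D P) =
      aeval x D * aeval w P ^ D.totalDegree := by
  have hP : aeval (Sum.elim (fun i => x i * aeval w P) w) (rename Sum.inr P) = aeval w P := by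
    rw [aeval_rename, Sum.elim_comp_inr]
  generalize aeval w P = q at hP ⊢
  rw [homogenizeWith, map_sum, aeval_def, eval₂_eq', Finset.sum_mul]
  refine Finset.sum_congr rfl fun α hα => ?_
  simp only [map_mul, map_pow, map_prod, aeval_C, aeval_X, hP, Sum.elim_inl, mul_pow,
    Finset.prod_mul_distrib, Finset.prod_pow_eq_pow_sum]
  rw [mul_assoc, mul_assoc, mul_assoc, ← pow_add, Nat.add_sub_cancel' (sum_le_totalDegree hα)]

theorem eval_homogenizeWith_ne_zero {K : Type*} [Field K] {D : MvPolynomial σ K}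
    {P : MvPolynomial τ K} (hD : ∀ v, eval v D ≠ 0) (hP : ∀ w, eval w P ≠ 0)
    (v : σ ⊕ τ → K) : eval v (homogenizeWith D P) ≠ 0 := by
  set q := aeval (v ∘ Sum.inr) P
  have hq : q ≠ 0 := hP _
  have hv : v = Sum.elim (fun i => v (Sum.inl i) * q⁻¹ * q) (v ∘ Sum.inr) := by
    ext (i | j)
    · simp [hq]
    · rfl
  show aeval v (homogenizeWith D P) ≠ 0
  rw [hv, aeval_homogenizeWith]
  exact mul_ne_zero (hD _) (pow_ne_zero _ hq)

end MvPolynomial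

section MAset

variable {k B : Type} [Field k] [CommRing B] [Algebra k B]

theorem aeval_mem_MAset {σ : Type*} [Finite σ] {D : MvPolynomial σ k}
    (hD : ∀ v, eval v D ≠ 0) (b : σ → B) : aeval b D ∈ MAset k B := by
  obtain ⟨m, ⟨e⟩⟩ := Finite.exists_equiv_fin σ
  refine ⟨m, rename e D, b ∘ e.symm, fun v => ?_, ?_⟩
  · rw [eval_rename]
    exact hD _
  · rw [aeval_rename, Function.comp_assoc, e.symm_comp_self, Function.comp_id]

theorem MAset.one_mem : (1 : B) ∈ MAset k B :=
  ⟨0, 1, Fin.elim0, by simp, by simp⟩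

theorem MAset.mul_mem {x y : B} (hx : x ∈ MAset k B) (hy : y ∈ MAset k B) :
    x * y ∈ MAset k B := by
  obtain ⟨m, D, b, hD, rfl⟩ := hx
  obtain ⟨n, E, c, hE, rfl⟩ := hy
  convert aeval_mem_MAset (D := rename Sum.inl D * rename Sum.inr E)
    (by simp [eval_rename, hD, hE]) (Sum.elim b c) using 1
  rw [map_mul, aeval_rename, aeval_rename, Sum.elim_comp_inl, Sum.elim_comp_inr]

variable (k B) in
def MAsubmonoid : Submonoid B where
  carrier := MAset k B
  one_mem' := MAset.one_mem
  mul_mem' := MAset.mul_mem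

theorem coe_closure_MAset : (Submonoid.closure (MAset k B) : Set B) = MAset k B :=
  congrArg SetLike.coe (Submonoid.closure_eq (MAsubmonoid k B))

end MAset

theorem isUnit_of_mem_MAset_of_isLocalization {k A L : Type} [Field k] [CommRing A]
    [Algebra k A] [CommRing L] [Algebra k L] [Algebra A L] [IsScalarTower k A L]
    (M : Submonoid A) (hM : (M : Set A) = MAset k A) [IsLocalization M L] {y : L}
    (hy : y ∈ MAset k L) : IsUnit y := by
  obtain ⟨m, D, b, hD, rfl⟩ := hy
  obtain ⟨⟨t, ht⟩, hb⟩ := IsLocalization.exist_integer_multiples_of_finite M b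
  choose a ha using hb
  obtain ⟨n, P, e, hP, rfl⟩ : t ∈ MAset k A := hM ▸ ht
  have hz : aeval (Sum.elim a e) (homogenizeWith D P) ∈ M := by
    rw [← SetLike.mem_coe, hM]
    exact aeval_mem_MAset (eval_homogenizeWith_ne_zero hD hP) _
  have himg : algebraMap A L (aeval (Sum.elim a e) (homogenizeWith D P)) =
      aeval b D * aeval (algebraMap A L ∘ e) P ^ D.totalDegree := by
    have hcoords : algebraMap A L ∘ Sum.elim a e = Sum.elim
        (fun i => b i * aeval (algebraMap A L ∘ e) P) (algebraMap A L ∘ e) := by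
      ext (i | j)
      · simp [ha, Algebra.smul_def, aeval_algebraMap_apply, mul_comm]
      · rfl
    rw [← aeval_algebraMap_apply, hcoords, aeval_homogenizeWith]
  exact isUnit_of_mul_isUnit_left (himg ▸ IsLocalization.map_units L ⟨_, hz⟩)

/-- A `k`-algebra `A` is a `*`-algebra (every element of `M_A` is invertible in `A`) if and
only if the canonical localization map `A → A_M` is an isomorphism.  In particular, `A_M` is
a `*`-algebra for every `k`-algebra `A`. -/
theorem starAlgebra_iff_canonicalLocalization_bijective (k A : Type) [Field k] [CommRing A]
    [Algebra k A] :
    ((∀ x ∈ MAset k A, IsUnit x) ↔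
      Function.Bijective
        (algebraMap A (Localization (Submonoid.closure (MAset k A))))) ∧
    (∀ y ∈ MAset k (Localization (Submonoid.closure (MAset k A))), IsUnit y) := by
  refine ⟨?_, fun y hy => isUnit_of_mem_MAset_of_isLocalization (k := k)
    (Submonoid.closure (MAset k A)) coe_closure_MAset hy⟩
  rw [IsLocalization.bijective_iff_le_isUnit (Submonoid.closure (MAset k A)), Submonoid.closure_le]
  rfl
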